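/- Let K be a convex body in S^m and let a ∈ S^m with a ∉ K ∪ K̆, where K̆ is the dual set of K. Then d(a,K) + d(a,K̆) = π/2. -/

import Mathlib

open MeasureTheory Real Set Filter
open scoped ENNReal NNReal BigOperators RealInnerProductSpace

noncomputable section

/-- Euclidean space `ℝ^{m+1}`. -/
abbrev Euc (m : ℕ) := EuclideanSpace ℝ (Fin (m + 1))

/-- The unit sphere `S^m ⊆ ℝ^{m+1}`. -/
def unitSphere (m : ℕ) : Set (Euc m) := Metric.sphere (0 : Euc m) 1

/-- Angular distance `d(x,y) = arccos ⟨x,y⟩` on the sphere. -/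
def angdist {m : ℕ} (x y : Euc m) : ℝ := Real.arccos ⟪x, y⟫

/-- Angular distance from a point to a set: `d(x,M) = inf {d(x,y) : y ∈ M}`. -/
def angdistSet {m : ℕ} (x : Euc m) (M : Set (Euc m)) : ℝ := sInf (angdist x '' M)

/-- The spherical cap `B(a,α)` of center `a` and angular radius `α`. -/
def cap {m : ℕ} (a : Euc m) (α : ℝ) : Set (Euc m) :=
  {x ∈ unitSphere m | angdist x a ≤ α}

/-- The projective ball `B(±a,α) = B(a,α) ∪ B(-a,α)`. -/
def projBall {m : ℕ} (a : Euc m) (α : ℝ) : Set (Euc m) := cap a α ∪ cap (-a) α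

/-- Solution set on the sphere of the system `⟨a_i , x⟩ ≤ 0, i = 1,…,n`. -/
def Sol {m n : ℕ} (A : Fin n → Euc m) : Set (Euc m) :=
  {x ∈ unitSphere m | ∀ i, ⟪A i, x⟫ ≤ 0}

/-- `A` is feasible iff its solution set is nonempty. -/
def Feasible {m n : ℕ} (A : Fin n → Euc m) : Prop := (Sol A).Nonempty

/-- `A` is strictly feasible iff its solution set has nonempty interior
relative to the sphere. -/
def StrictlyFeasible {m n : ℕ} (A : Fin n → Euc m) : Prop :=
  ∃ x ∈ Sol A, ∃ ε > (0:ℝ), ∀ y ∈ unitSphere m, dist y x < ε → y ∈ Sol A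

/-- The set `Σ_{n,m}` of ill-posed instances: feasible but not strictly feasible. -/
def illPosed (m n : ℕ) : Set (Fin n → Euc m) :=
  {A | (∀ i, A i ∈ unitSphere m) ∧ Feasible A ∧ ¬ StrictlyFeasible A}

/-- Distance `d(A,B) = max_i d(a_i,b_i)` on `(S^m)^n`. -/
def dProd {m n : ℕ} (A B : Fin n → Euc m) : ℝ := ⨆ i, angdist (A i) (B i)

/-- Distance of an instance to the set of ill-posed instances. -/
def distSigma {m n : ℕ} (A : Fin n → Euc m) : ℝ :=
  sInf (dProd A '' illPosed m n)

/-- The GCC condition number `𝒞(A) = 1 / sin d(A, Σ_{n,m})`. -/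
def GCC {m n : ℕ} (A : Fin n → Euc m) : ℝ := 1 / Real.sin (distSigma A)

/-- Uniform probability distribution on the spherical cap `B(a,α)`
(normalized `m`-dimensional Hausdorff measure). -/
def capUniform {m : ℕ} (a : Euc m) (α : ℝ) : Measure (Euc m) :=
  (μH[m] (cap a α))⁻¹ • μH[m].restrict (cap a α)

/-- Uniform probability distribution on the sphere `S^m`. -/
def sphereUniform (m : ℕ) : Measure (Euc m) :=
  (μH[m] (unitSphere m))⁻¹ • μH[m].restrict (unitSphere m)

/-- `I_k(α) = ∫_0^α (sin t)^{k-1} dt` (real exponent `k`). -/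
def Ifun (k α : ℝ) : ℝ := ∫ t in (0:ℝ)..α, (Real.sin t) ^ (k - 1)

/-- Adversarial probability distribution on `B(ā,α)` with parameters `β, H`:
a probability measure with density `f(x) = g(sin d(x,ā))` with respect to the
uniform distribution on `B(ā,α)`, where `g(r) = C·r^{-β}·h(r)`, `g` is
monotonically decreasing, `0 ≤ β < m`, `h` is continuous and nonnegative with
`h(0) ≠ 0`, `H = sup h`, and `C = I_m(α)/I_{m-β}(α)`. -/
def IsAdversarial {m : ℕ} (μ : Measure (Euc m)) (abar : Euc m) (α β H : ℝ) : Prop :=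
  0 ≤ β ∧ β < m ∧ IsProbabilityMeasure μ ∧
  ∃ h : ℝ → ℝ,
    ContinuousOn h (Icc 0 (Real.sin α)) ∧
    (∀ r ∈ Icc (0:ℝ) (Real.sin α), 0 ≤ h r) ∧
    h 0 ≠ 0 ∧
    H = sSup (h '' Icc (0:ℝ) (Real.sin α)) ∧
    AntitoneOn (fun r => Ifun m α / Ifun (m - β) α * r ^ (-β) * h r)
      (Ioc (0:ℝ) (Real.sin α)) ∧
    μ = (capUniform abar α).withDensity
      (fun x => ENNReal.ofReal (Ifun m α / Ifun (m - β) α *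
        (Real.sin (angdist x abar)) ^ (-β) * h (Real.sin (angdist x abar))))

/-- Adversarial probability distribution on `B(ā,α)` with parameters `β = 0, H`:
a probability measure with radially symmetric density `g(sin d(x,ā)) ≤ H` with
respect to the uniform distribution on `B(ā,α)`, where `g` is continuous,
monotonically decreasing, nonnegative, `g(0) ≠ 0` and `H = sup g`. -/
def IsAdversarial0 {m : ℕ} (μ : Measure (Euc m)) (abar : Euc m) (α H : ℝ) : Prop :=
  IsProbabilityMeasure μ ∧
  ∃ g : ℝ → ℝ,
    ContinuousOn g (Icc 0 (Real.sin α)) ∧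
    AntitoneOn g (Icc (0:ℝ) (Real.sin α)) ∧
    (∀ r ∈ Icc (0:ℝ) (Real.sin α), 0 ≤ g r) ∧
    g 0 ≠ 0 ∧
    H = sSup (g '' Icc (0:ℝ) (Real.sin α)) ∧
    μ = (capUniform abar α).withDensity
      (fun x => ENNReal.ofReal (g (Real.sin (angdist x abar))))

/-- Spherical convexity: for all `x,y ∈ K` with `x ≠ ±y`, the great circle
segment `cone{x,y} ∩ S^m` is contained in `K`. -/
def SphConvex {m : ℕ} (K : Set (Euc m)) : Prop :=
  ∀ x ∈ K, ∀ y ∈ K, x ≠ y → x ≠ -y → ∀ l₁ l₂ : ℝ, 0 ≤ l₁ → 0 ≤ l₂ →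
    l₁ • x + l₂ • y ∈ unitSphere m → l₁ • x + l₂ • y ∈ K

/-- Properly convex: nonempty, spherically convex, and containing no pair of
antipodal points. -/
def ProperlyConvex {m : ℕ} (K : Set (Euc m)) : Prop :=
  K.Nonempty ∧ K ⊆ unitSphere m ∧ SphConvex K ∧ ∀ x ∈ K, -x ∉ K

/-- The `φ`-neighborhood `T(M,φ) = {x ∈ S^m : d(x,M) < φ}`. -/
def nbhdT {m : ℕ} (M : Set (Euc m)) (φ : ℝ) : Set (Euc m) :=
  {x ∈ unitSphere m | angdistSet x M < φ}

/-- The closed `δ`-neighborhood `{x ∈ S^m : d(x,M) ≤ δ}`. -/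
def nbhdClosed {m : ℕ} (M : Set (Euc m)) (δ : ℝ) : Set (Euc m) :=
  {x ∈ unitSphere m | angdistSet x M ≤ δ}

/-- The boundary of `K ⊆ S^m` relative to the sphere. -/
def sphBoundary {m : ℕ} (K : Set (Euc m)) : Set (Euc m) :=
  closure K ∩ closure (unitSphere m \ K)

/-- `O_k = vol(S^k) = 2π^{(k+1)/2}/Γ((k+1)/2)` (real index `k`). -/
def sphereVolR (k : ℝ) : ℝ := 2 * Real.pi ^ ((k + 1) / 2) / Real.Gamma ((k + 1) / 2)

/-- The convex cone generated by a set `M`. -/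
def coneGen {m : ℕ} (M : Set (Euc m)) : Set (Euc m) :=
  {x | ∃ (k : ℕ) (c : Fin k → ℝ) (v : Fin k → Euc m),
    (∀ j, 0 ≤ c j) ∧ (∀ j, v j ∈ M) ∧ x = ∑ j, c j • v j}

/-- The spherical convex hull `sconv(M) = cone(M) ∩ S^m`. -/
def sconv {m : ℕ} (M : Set (Euc m)) : Set (Euc m) := coneGen M ∩ unitSphere m

/-- The dual set `M̆ = {a ∈ S^m : ⟨a,x⟩ ≤ 0 for all x ∈ M}`. -/
def dualSet {m : ℕ} (M : Set (Euc m)) : Set (Euc m) :=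
  {a ∈ unitSphere m | ∀ x ∈ M, ⟪a, x⟫ ≤ 0}

/-- `K` has nonempty interior relative to the sphere. -/
def HasSphInterior {m : ℕ} (K : Set (Euc m)) : Prop :=
  ∃ x ∈ K, ∃ ε > (0:ℝ), ∀ y ∈ unitSphere m, dist y x < ε → y ∈ K

/-- A convex body in `S^m`: a closed spherically convex set such that both it
and its dual have nonempty interior in `S^m`. -/
def IsConvexBody {m : ℕ} (K : Set (Euc m)) : Prop :=
  K ⊆ unitSphere m ∧ IsClosed K ∧ SphConvex K ∧
    HasSphInterior K ∧ HasSphInterior (dualSet K)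

/-- `V` is a smooth (`C^∞`) hypersurface of the sphere `S^m`: locally around
each of its points it is the zero set, within the sphere, of a smooth function
whose differential does not vanish on the tangent space of the sphere. -/
def IsSmoothHypersurface {m : ℕ} (V : Set (Euc m)) : Prop :=
  V ⊆ unitSphere m ∧ ∀ x ∈ V, ∃ f : Euc m → ℝ, ContDiff ℝ (⊤ : ℕ∞) f ∧
    (∃ U ∈ nhds x, V ∩ U = {y ∈ unitSphere m | f y = 0} ∩ U) ∧
    ∃ v : Euc m, ⟪x, v⟫ = 0 ∧ fderiv ℝ f x v ≠ 0

/-- `p(k,m) = 2^{-(k-1)} ∑_{i=0}^m binom(k-1,i)`. -/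
def pkm (k m : ℕ) : ℝ :=
  (∑ i ∈ Finset.range (m + 1), (Nat.choose (k - 1) i : ℝ)) / 2 ^ (k - 1)

/-- Hausdorff distance between subsets of the sphere, via closed angular
neighborhoods. -/
def sphHausdorffDist {m : ℕ} (K K' : Set (Euc m)) : ℝ :=
  sInf {δ : ℝ | 0 ≤ δ ∧ K ⊆ nbhdClosed K' δ ∧ K' ⊆ nbhdClosed K δ}

end

section Aux

lemma arccos_antitone' {x y : ℝ} (h : x ≤ y) : Real.arccos y ≤ Real.arccos x := by
  unfold Real.arccos
  have := Real.monotone_arcsin h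
  linarith

lemma mem_unitSphere {m : ℕ} {x : Euc m} : x ∈ unitSphere m ↔ ‖x‖ = 1 := by
  simp [unitSphere, mem_sphere_zero_iff_norm]

lemma no_antipodal {m : ℕ} {K : Set (Euc m)} (hKsub : K ⊆ unitSphere m)
    (hD : HasSphInterior (dualSet K)) {x : Euc m} (hx : x ∈ K) : -x ∉ K := by
  intro hnx
  obtain ⟨y, hyD, ε, hε, hball⟩ := hD
  have hy1 : ‖y‖ = 1 := mem_unitSphere.mp hyD.1
  have hx1 : ‖x‖ = 1 := mem_unitSphere.mp (hKsub hx)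
  have h1 : ⟪y, x⟫ ≤ 0 := hyD.2 x hx
  have h2 : ⟪y, -x⟫ ≤ 0 := hyD.2 (-x) hnx
  rw [inner_neg_right] at h2
  have hyx : ⟪y, x⟫ = 0 := le_antisymm h1 (by linarith)
  set δ : ℝ := min (ε/3) 1 with hδdef
  have hδ0 : 0 < δ := lt_min (by linarith) one_pos
  have hδ1 : δ ≤ 1 := min_le_right _ _
  have hδε : 2*δ < ε := by
    have h3 : δ ≤ ε/3 := min_le_left (ε/3) 1
    linarith
  set w : Euc m := y + δ • x with hwdef
  have hwnsq : ‖w‖^2 = 1 + δ^2 := by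
    rw [hwdef, norm_add_sq_real, real_inner_smul_right, hyx, norm_smul, hy1, hx1]
    rw [Real.norm_eq_abs, abs_of_pos hδ0]; ring
  have hwn_pos : 0 < ‖w‖ := by nlinarith [norm_nonneg w]
  have hwge : 1 ≤ ‖w‖ := by nlinarith [norm_nonneg w]
  have hwinv1 : ‖w‖⁻¹ ≤ 1 := by
    rw [inv_le_one_iff₀]; right; exact hwge
  have hwinv0 : 0 < ‖w‖⁻¹ := inv_pos.mpr hwn_pos
  set y' : Euc m := ‖w‖⁻¹ • w with hy'def
  have hy'1 : ‖y'‖ = 1 := by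
    rw [hy'def, norm_smul, Real.norm_eq_abs, abs_of_pos hwinv0,
      inv_mul_cancel₀ (ne_of_gt hwn_pos)]
  have hwinvge : 1 - δ ≤ ‖w‖⁻¹ := by
    have hwle : ‖w‖ ≤ 1 + δ := by nlinarith
    have h4 : (1 - δ) * ‖w‖ ≤ 1 := by nlinarith
    rw [← one_div, le_div_iff₀ hwn_pos]; exact h4
  have heq : y' - y = (‖w‖⁻¹ - 1) • y + (‖w‖⁻¹ * δ) • x := by
    rw [hy'def, hwdef]; module
  have hnorm : ‖y' - y‖ ≤ 2*δ := by
    rw [heq]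
    have hb1 : |‖w‖⁻¹ - 1| ≤ δ := abs_le.mpr ⟨by linarith, by linarith⟩
    have hb2 : |‖w‖⁻¹ * δ| ≤ δ := by
      rw [abs_of_pos (by positivity)]; nlinarith
    calc ‖(‖w‖⁻¹ - 1) • y + (‖w‖⁻¹ * δ) • x‖
        ≤ ‖(‖w‖⁻¹ - 1) • y‖ + ‖(‖w‖⁻¹ * δ) • x‖ := norm_add_le _ _
      _ = |‖w‖⁻¹ - 1| + |‖w‖⁻¹ * δ| := by
          rw [norm_smul, norm_smul, hy1, hx1, Real.norm_eq_abs, Real.norm_eq_abs]; ring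
      _ ≤ 2*δ := by linarith
  have hy'D : y' ∈ dualSet K :=
    hball y' (mem_unitSphere.mpr hy'1) (by rw [dist_eq_norm]; linarith)
  have hle := hy'D.2 x hx
  have hinner : ⟪y', x⟫ = ‖w‖⁻¹ * δ := by
    rw [hy'def, hwdef, real_inner_smul_left, inner_add_left, real_inner_smul_left, hyx,
      real_inner_self_eq_norm_sq, hx1]
    ring
  rw [hinner] at hle
  nlinarith
end Aux


/-- For a convex body `K` in `S^m` and `a ∉ K ∪ K̆`,
`d(a,K) + d(a,K̆) = π/2`. -/
theorem dist_add_dist_dual (m : ℕ) (K : Set (Euc m)) (hK : IsConvexBody K)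
    (a : Euc m) (ha : a ∈ unitSphere m) (haK : a ∉ K ∪ dualSet K) :
    angdistSet a K + angdistSet a (dualSet K) = π / 2 := by
  obtain ⟨hKsub, hKcl, hKconv, hKint, hDint⟩ := hK
  have hanorm : ‖a‖ = 1 := mem_unitSphere.mp ha
  obtain ⟨x0, hx0K, -⟩ := hKint
  have hKne : K.Nonempty := ⟨x0, hx0K⟩
  have haNK : a ∉ K := fun h => haK (Or.inl h)
  have haND : a ∉ dualSet K := fun h => haK (Or.inr h)
  have hKcomp : IsCompact K :=
    (isCompact_sphere (0 : Euc m) 1).of_isClosed_subset hKcl hKsub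
  have hcont : ContinuousOn (fun x : Euc m => ⟪a, x⟫) K :=
    (continuous_const.inner continuous_id).continuousOn
  obtain ⟨p, hpK, hpmax'⟩ := hKcomp.exists_isMaxOn hKne hcont
  have hpmax : ∀ x ∈ K, ⟪a, x⟫ ≤ ⟪a, p⟫ := fun x hx => hpmax' hx
  have hpnorm : ‖p‖ = 1 := mem_unitSphere.mp (hKsub hpK)
  set s : ℝ := ⟪a, p⟫ with hsdef
  have hs0 : 0 < s := by
    have hforall : ¬ ∀ x ∈ K, ⟪a, x⟫ ≤ 0 := fun h => haND ⟨ha, h⟩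
    push_neg at hforall
    obtain ⟨x, hxK, hxpos⟩ := hforall
    exact lt_of_lt_of_le hxpos (hpmax x hxK)
  have hs1' : s ≤ 1 := by
    have := real_inner_le_norm a p
    rw [hanorm, hpnorm] at this; linarith
  have hs1 : s < 1 := by
    rcases lt_or_eq_of_le hs1' with h | h
    · exact h
    · exfalso
      have : a = p := (inner_eq_one_iff_of_norm_eq_one hanorm hpnorm).mp h
      exact haNK (this ▸ hpK)
  -- key inequality: the maximizer p gives a supporting relation
  have key : ∀ x ∈ K, ⟪a, x⟫ ≤ s * ⟪p, x⟫ := by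
    intro x hx
    have hxnorm : ‖x‖ = 1 := mem_unitSphere.mp (hKsub hx)
    by_cases hxp : x = p
    · subst hxp
      rw [real_inner_self_eq_norm_sq, hxnorm, ← hsdef]
      norm_num
    · have hpnx : p ≠ -x := by
        intro h
        exact no_antipodal hKsub hDint hx (h ▸ hpK)
      have hstep : ∀ ε : ℝ, 0 < ε → ε < 1 → ⟪a, x⟫ ≤ s * ⟪p, x⟫ + s * ε / 2 := by
        intro ε hε0 hε1
        set u : ℝ := ⟪p, x⟫ with hudef
        have hu : |u| ≤ 1 := by
          have := abs_real_inner_le_norm p x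
          rw [hpnorm, hxnorm] at this; linarith
        have hu1 : -1 ≤ u := (abs_le.mp hu).1
        have hu2 : u ≤ 1 := (abs_le.mp hu).2
        set w : Euc m := p + ε • x with hwdef
        have hwnsq : ‖w‖^2 = 1 + 2*ε*u + ε^2 := by
          rw [hwdef, norm_add_sq_real, real_inner_smul_right, norm_smul, hpnorm, hxnorm,
            Real.norm_eq_abs, abs_of_pos hε0, ← hudef]
          ring
        have hwpos : 0 < ‖w‖ := by nlinarith [norm_nonneg w]
        have hz : ‖w‖⁻¹ • p + (‖w‖⁻¹ * ε) • x ∈ K := by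
          apply hKconv p hpK x hx (Ne.symm hxp) hpnx _ _ (le_of_lt (inv_pos.mpr hwpos))
            (by positivity)
          have hcomb : ‖w‖⁻¹ • p + (‖w‖⁻¹ * ε) • x = ‖w‖⁻¹ • w := by
            rw [hwdef]; module
          rw [hcomb, mem_unitSphere, norm_smul, Real.norm_eq_abs,
            abs_of_pos (inv_pos.mpr hwpos), inv_mul_cancel₀ (ne_of_gt hwpos)]
        have hle := hpmax _ hz
        have hinner : ⟪a, ‖w‖⁻¹ • p + (‖w‖⁻¹ * ε) • x⟫ = ‖w‖⁻¹ * (s + ε * ⟪a, x⟫) := by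
          rw [inner_add_right, real_inner_smul_right, real_inner_smul_right, ← hsdef]
          ring
        rw [hinner] at hle
        have hle2 : s + ε * ⟪a, x⟫ ≤ s * ‖w‖ := by
          have h5 := mul_le_mul_of_nonneg_left hle (le_of_lt hwpos)
          rw [← mul_assoc, mul_inv_cancel₀ (ne_of_gt hwpos), one_mul] at h5
          linarith [h5]
        have hwub : ‖w‖ ≤ 1 + ε*u + ε^2/2 := by
          have hpos2 : (0:ℝ) ≤ 1 + ε*u + ε^2/2 := by nlinarith
          nlinarith [norm_nonneg w, hwnsq, sq_nonneg (ε*u + ε^2/2)]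
        have h6 : s + ε * ⟪a, x⟫ ≤ s * (1 + ε*u + ε^2/2) :=
          hle2.trans (mul_le_mul_of_nonneg_left hwub (le_of_lt hs0))
        have hfin : ε * ⟪a, x⟫ ≤ ε * (s * u + s * ε / 2) := by nlinarith
        have h7 := le_of_mul_le_mul_left hfin hε0
        rw [hudef] at h7
        linarith
      apply le_of_forall_pos_le_add
      intro ε' hε'
      have hεdef : 0 < min (ε'/s) (1/2) := lt_min (by positivity) (by norm_num)
      have h1 : min (ε'/s) (1/2) < 1 := lt_of_le_of_lt (min_le_right _ _) (by norm_num)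
      have h2 := hstep _ hεdef h1
      have h3 : s * min (ε'/s) (1/2) ≤ ε' := by
        calc s * min (ε'/s) (1/2) ≤ s * (ε'/s) :=
              mul_le_mul_of_nonneg_left (min_le_left _ _) (le_of_lt hs0)
          _ = ε' := by field_simp
      linarith
  -- construction of the dual maximizer q
  set c : ℝ := Real.sqrt (1 - s^2) with hcdef
  have hc2 : c^2 = 1 - s^2 := Real.sq_sqrt (by nlinarith)
  have hc0 : 0 < c := Real.sqrt_pos.mpr (by nlinarith)
  set q : Euc m := c⁻¹ • (a - s • p) with hqdef
  have hsub_nsq : ‖a - s • p‖^2 = 1 - s^2 := by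
    rw [norm_sub_sq_real, real_inner_smul_right, norm_smul, hanorm, hpnorm,
      Real.norm_eq_abs, abs_of_pos hs0, ← hsdef]
    ring
  have hsubnorm : ‖a - s • p‖ = c := by
    rw [hcdef, ← hsub_nsq, Real.sqrt_sq (norm_nonneg _)]
  have hqnorm : ‖q‖ = 1 := by
    rw [hqdef, norm_smul, Real.norm_eq_abs, abs_of_pos (inv_pos.mpr hc0), hsubnorm,
      inv_mul_cancel₀ (ne_of_gt hc0)]
  have hqD : q ∈ dualSet K := by
    refine ⟨mem_unitSphere.mpr hqnorm, ?_⟩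
    intro x hx
    have hqx : ⟪q, x⟫ = c⁻¹ * (⟪a, x⟫ - s * ⟪p, x⟫) := by
      rw [hqdef, real_inner_smul_left, inner_sub_left, real_inner_smul_left]
    rw [hqx]
    have hk := key x hx
    have hinv : (0:ℝ) ≤ c⁻¹ := by positivity
    exact mul_nonpos_iff.mpr (Or.inl ⟨hinv, by linarith⟩)
  have haq : ⟪a, q⟫ = c := by
    rw [hqdef, real_inner_smul_right, inner_sub_right, real_inner_smul_right,
      real_inner_self_eq_norm_sq, hanorm, ← hsdef]
    have h8 : (1:ℝ)^2 - s*s = c^2 := by nlinarith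
    rw [h8, pow_two, ← mul_assoc, inv_mul_cancel₀ (ne_of_gt hc0), one_mul]
  have hub : ∀ y ∈ dualSet K, ⟪a, y⟫ ≤ c := by
    intro y hyD
    have hynorm : ‖y‖ = 1 := mem_unitSphere.mp hyD.1
    have hdecomp : a = s • p + c • q := by
      rw [hqdef, smul_smul, mul_inv_cancel₀ (ne_of_gt hc0), one_smul]
      module
    have hval : ⟪a, y⟫ = s * ⟪p, y⟫ + c * ⟪q, y⟫ := by
      conv_lhs => rw [hdecomp]
      rw [inner_add_left, real_inner_smul_left, real_inner_smul_left]
    have h1 : ⟪y, p⟫ ≤ 0 := hyD.2 p hpK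
    have h2 : ⟪q, y⟫ ≤ 1 := by
      have := real_inner_le_norm q y
      rw [hqnorm, hynorm] at this; linarith
    have h1' : ⟪p, y⟫ ≤ 0 := by rwa [real_inner_comm]
    rw [hval]
    have hA : s * ⟪p, y⟫ ≤ 0 := mul_nonpos_iff.mpr (Or.inl ⟨le_of_lt hs0, h1'⟩)
    have hB : c * ⟪q, y⟫ ≤ c * 1 := mul_le_mul_of_nonneg_left h2 (le_of_lt hc0)
    linarith
  -- compute the two distances
  have hdK : angdistSet a K = Real.arccos s := by
    unfold angdistSet
    apply le_antisymm
    · have hmem : angdist a p ∈ angdist a '' K := ⟨p, hpK, rfl⟩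
      have h9 : sInf (angdist a '' K) ≤ angdist a p :=
        csInf_le ⟨0, by rintro z ⟨x, hx, rfl⟩; exact Real.arccos_nonneg _⟩ hmem
      simpa [angdist, ← hsdef] using h9
    · apply le_csInf (hKne.image _)
      rintro z ⟨x, hx, rfl⟩
      exact arccos_antitone' (hpmax x hx)
  have hdD : angdistSet a (dualSet K) = Real.arccos c := by
    unfold angdistSet
    apply le_antisymm
    · have hmem : angdist a q ∈ angdist a '' dualSet K := ⟨q, hqD, rfl⟩
      have h9 : sInf (angdist a '' dualSet K) ≤ angdist a q :=
        csInf_le ⟨0, by rintro z ⟨x, hx, rfl⟩; exact Real.arccos_nonneg _⟩ hmem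
      simpa [angdist, haq] using h9
    · apply le_csInf (Set.Nonempty.image _ ⟨q, hqD⟩)
      rintro z ⟨y, hy, rfl⟩
      exact arccos_antitone' (hub y hy)
  have harcc : Real.arccos c = π/2 - Real.arccos s := by
    have h1 : Real.arccos s ≤ π/2 := Real.arccos_le_pi_div_two.mpr (le_of_lt hs0)
    have h2 : (0:ℝ) ≤ Real.arccos s := Real.arccos_nonneg s
    have h3 : c = Real.cos (π/2 - Real.arccos s) := by
      rw [Real.cos_pi_div_two_sub, Real.sin_arccos, hcdef]
    rw [h3, Real.arccos_cos (by linarith) (by linarith [Real.pi_pos])]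
  rw [hdK, hdD, harcc]
  ring
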